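/- arXiv:2501.01324 — 2 statements merged into one kernel-verified Lean document; each statement's English description precedes it below -/
import Mathlib

section
/- Let n ≥ 2 be an integer, σ > 0 a real number, and ρ a real number with ρ² < 1. Let Σ = (σ²/(1−ρ²))·R, where R is the n×n matrix with entries R(t,t') = ρ^{|t−t'|}. Then for every symmetric n×n real matrix C, tr(Σ⁻¹ C) = (1/σ²)·( Σ_{t=1}^{n} C(t,t) + ρ²·Σ_{t=2}^{n−1} C(t,t) − 2ρ·Σ_{t=1}^{n−1} C(t,t+1) ). -/
open Matrix Finset

/-- The AR(1) correlation matrix with entries `ρ^{|t-t'|}` (0-indexed by `Fin n`). -/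
noncomputable def ar1CorrMatrix (n : ℕ) (ρ : ℝ) : Matrix (Fin n) (Fin n) ℝ :=
  Matrix.of fun t t' => ρ ^ (((t : ℤ) - (t' : ℤ)).natAbs)

noncomputable def ar1Prec (n : ℕ) (ρ : ℝ) : Matrix (Fin n) (Fin n) ℝ :=
  Matrix.of fun i k =>
    (if (k:ℕ) = (i:ℕ) then (if (i:ℕ) = 0 ∨ (i:ℕ) + 1 = n then 1 else 1 + ρ^2) else 0)
    + (if (k:ℕ) + 1 = (i:ℕ) then -ρ else 0)
    + (if (k:ℕ) = (i:ℕ) + 1 then -ρ else 0)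

lemma sum_fin_eq {n : ℕ} (m : ℕ) (g : Fin n → ℝ) :
    ∑ k : Fin n, (if (k:ℕ) = m then g k else 0) = if h : m < n then g ⟨m, h⟩ else 0 := by
  split_ifs with h
  · have he : ∀ k : Fin n, ((k:ℕ) = m) = (k = ⟨m, h⟩) := fun k => by simp [Fin.ext_iff]
    simp_rw [he]; simp
  · exact Finset.sum_eq_zero fun k _ => by rw [if_neg]; omega

lemma sum_fin_eq' {n : ℕ} (m : ℕ) (g : Fin n → ℝ) :
    ∑ k : Fin n, (if (k:ℕ) + 1 = m then g k else 0) =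
      if h : m - 1 < n ∧ 1 ≤ m then g ⟨m - 1, h.1⟩ else 0 := by
  cases m with
  | zero => simp
  | succ m' =>
      have he : ∀ k : Fin n, ((k:ℕ) + 1 = m' + 1) = ((k:ℕ) = m') := fun k => by simp
      simp_rw [he]
      rw [sum_fin_eq]
      by_cases h : m' < n
      · rw [dif_pos h, dif_pos ⟨by simpa using h, by omega⟩]
        congr 1
      · rw [dif_neg h, dif_neg (by omega)]

lemma sum_pred {n : ℕ} (f : ℕ → ℝ) :
    ∑ i : Fin n, (if 1 ≤ (i:ℕ) then f ((i:ℕ) - 1) else 0) = ∑ t : Fin (n-1), f t := by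
  rw [Fin.sum_univ_eq_sum_range (fun i => if 1 ≤ i then f (i-1) else 0) n,
      Fin.sum_univ_eq_sum_range (fun t => f t) (n-1)]
  cases n with
  | zero => simp
  | succ m =>
      rw [Finset.sum_range_succ' (fun i => if 1 ≤ i then f (i-1) else 0) m]
      simp

lemma sum_succ_lt {n : ℕ} (f : ℕ → ℝ) :
    ∑ i : Fin n, (if (i:ℕ) + 1 < n then f i else 0) = ∑ t : Fin (n-1), f t := by
  rw [Fin.sum_univ_eq_sum_range (fun i => if i + 1 < n then f i else 0) n,
      Fin.sum_univ_eq_sum_range (fun t => f t) (n-1)]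
  rw [← Finset.sum_subset (Finset.range_subset_range.2 (Nat.sub_le n 1))]
  · exact Finset.sum_congr rfl fun i hi => by
      rw [Finset.mem_range] at hi; rw [if_pos (by omega)]
  · intro i hi hni
    rw [Finset.mem_range] at hi hni
    rw [if_neg (by omega)]

lemma ar1_key (ρ : ℝ) (n a b : ℕ) (hn : 2 ≤ n) (han : a < n) (hbn : b < n) :
    (if a = 0 ∨ a + 1 = n then (1:ℝ) else 1 + ρ^2) * ρ^(((a:ℤ)-(b:ℤ)).natAbs)
      + (if 1 ≤ a then -ρ * ρ^(((a:ℤ)-1-(b:ℤ)).natAbs) else 0)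
      + (if a + 1 < n then -ρ * ρ^(((a:ℤ)+1-(b:ℤ)).natAbs) else 0)
    = if a = b then 1 - ρ^2 else 0 := by
  by_cases hab : a = b
  · subst hab
    rw [if_pos rfl]
    obtain ⟨e1, e2, e3⟩ : ((a:ℤ)-a).natAbs = 0 ∧ ((a:ℤ)-1-a).natAbs = 1 ∧
        ((a:ℤ)+1-a).natAbs = 1 := ⟨by omega, by omega, by omega⟩
    rw [e1, e2, e3]
    by_cases h0 : a = 0
    · rw [if_pos (Or.inl h0), if_neg (by omega), if_pos (by omega)]
      ring
    · by_cases h1 : a + 1 = n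
      · rw [if_pos (Or.inr h1), if_pos (by omega), if_neg (by omega)]
        ring
      · rw [if_neg (by tauto), if_pos (by omega), if_pos (by omega)]
        ring
  · rw [if_neg hab]
    rcases Nat.lt_or_ge a b with h | h
    · -- a < b
      obtain ⟨m, e1, e2, e3⟩ : ∃ m, ((a:ℤ)-b).natAbs = m+1 ∧ ((a:ℤ)-1-b).natAbs = m+2 ∧
          ((a:ℤ)+1-b).natAbs = m := ⟨((a:ℤ)+1-b).natAbs, by omega, by omega, rfl⟩
      rw [e1, e2, e3]
      by_cases h0 : a = 0
      · rw [if_pos (Or.inl h0), if_neg (by omega), if_pos (by omega)]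
        ring
      · rw [if_neg (by omega), if_pos (by omega), if_pos (by omega)]
        ring
    · -- b < a
      have hba : b < a := by omega
      obtain ⟨m, e1, e2, e3⟩ : ∃ m, ((a:ℤ)-b).natAbs = m+1 ∧ ((a:ℤ)-1-b).natAbs = m ∧
          ((a:ℤ)+1-b).natAbs = m+2 := ⟨((a:ℤ)-1-b).natAbs, by omega, rfl, by omega⟩
      rw [e1, e2, e3]
      by_cases h1 : a + 1 = n
      · rw [if_pos (Or.inr h1), if_pos (by omega), if_neg (by omega)]
        ring
      · rw [if_neg (by omega), if_pos (by omega), if_pos (by omega)]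
        ring

lemma ar1Prec_mul_corr {n : ℕ} (hn : 2 ≤ n) (ρ : ℝ) :
    ar1Prec n ρ * ar1CorrMatrix n ρ = (1 - ρ^2) • (1 : Matrix (Fin n) (Fin n) ℝ) := by
  ext i j
  rw [Matrix.mul_apply]
  simp only [ar1Prec, ar1CorrMatrix, Matrix.of_apply, Matrix.smul_apply, Matrix.one_apply,
    smul_eq_mul]
  set d : ℝ := if (i:ℕ) = 0 ∨ (i:ℕ) + 1 = n then 1 else 1 + ρ^2 with hd
  simp only [ite_mul, zero_mul, add_mul]
  rw [Finset.sum_add_distrib, Finset.sum_add_distrib,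
    sum_fin_eq (i:ℕ) (fun k => d * ρ ^ (((k:ℤ) - (j:ℤ)).natAbs)),
    sum_fin_eq' (i:ℕ) (fun k => -ρ * ρ ^ (((k:ℤ) - (j:ℤ)).natAbs)),
    sum_fin_eq ((i:ℕ)+1) (fun k => -ρ * ρ ^ (((k:ℤ) - (j:ℤ)).natAbs))]
  rw [dif_pos i.isLt]
  have K := ar1_key ρ n (i:ℕ) (j:ℕ) hn i.isLt j.isLt
  rw [← hd] at K
  have hR : (if (i:ℕ) = (j:ℕ) then (1:ℝ) - ρ^2 else 0) = (1 - ρ^2) * (if i = j then 1 else 0) := by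
    by_cases h : i = j
    · rw [if_pos h, if_pos (by rw [h]), mul_one]
    · rw [if_neg h, if_neg (fun hc => h (Fin.ext hc)), mul_zero]
  rw [hR] at K
  try simp only [Fin.val_mk]
  by_cases h1 : 1 ≤ (i:ℕ)
  · rw [dif_pos (⟨by omega, h1⟩ : (i:ℕ) - 1 < n ∧ 1 ≤ (i:ℕ)), if_pos h1] at *
    try simp only [Fin.val_mk]
    have ecast : (((i:ℕ) - 1 : ℕ) : ℤ) = ((i:ℕ) : ℤ) - 1 := by omega
    rw [ecast]
    by_cases h2 : (i:ℕ) + 1 < n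
    · rw [dif_pos h2, if_pos h2] at *
      try simp only [Fin.val_mk]
      rw [show (((i:ℕ) + 1 : ℕ) : ℤ) = ((i:ℕ) : ℤ) + 1 by push_cast; ring]
      exact K
    · rw [dif_neg h2, if_neg h2] at *
      exact K
  · rw [dif_neg (by omega), if_neg h1] at *
    by_cases h2 : (i:ℕ) + 1 < n
    · rw [dif_pos h2, if_pos h2] at *
      try simp only [Fin.val_mk]
      rw [show (((i:ℕ) + 1 : ℕ) : ℤ) = ((i:ℕ) : ℤ) + 1 by push_cast; ring]
      exact K
    · rw [dif_neg h2, if_neg h2] at *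
      exact K

/-- Trace formula for the inverse stationary AR(1) covariance matrix against a
symmetric matrix `C`:
`tr(Σ⁻¹ C) = (1/σ²)(Σ_{t=1}^n C(t,t) + ρ² Σ_{t=2}^{n-1} C(t,t) − 2ρ Σ_{t=1}^{n-1} C(t,t+1))`
(here 0-indexed). -/
theorem ar1Cov_inv_trace (n : ℕ) (hn : 2 ≤ n) (σ ρ : ℝ)
    (hσ : 0 < σ) (hρ : ρ ^ 2 < 1)
    (C : Matrix (Fin n) (Fin n) ℝ) (hC : C.IsSymm) :
    (((σ ^ 2 / (1 - ρ ^ 2)) • ar1CorrMatrix n ρ)⁻¹ * C).trace =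
      (1 / σ ^ 2) *
        ((∑ t : Fin n, C t t) +
          ρ ^ 2 * ∑ t ∈ Finset.univ.filter
              (fun t : Fin n => 1 ≤ (t : ℕ) ∧ (t : ℕ) + 1 < n), C t t -
          2 * ρ * ∑ t : Fin (n - 1),
            C ⟨(t : ℕ), lt_of_lt_of_le t.isLt (Nat.sub_le n 1)⟩
              ⟨(t : ℕ) + 1, Nat.add_lt_of_lt_sub t.isLt⟩) := by
  have hρ1 : (0:ℝ) < 1 - ρ^2 := by nlinarith
  have hσ2 : (σ:ℝ)^2 ≠ 0 := by positivity
  have hinv : ((σ ^ 2 / (1 - ρ ^ 2)) • ar1CorrMatrix n ρ)⁻¹ = (1/σ^2) • ar1Prec n ρ := by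
    apply Matrix.inv_eq_left_inv
    rw [Matrix.smul_mul, Matrix.mul_smul, ar1Prec_mul_corr hn ρ, smul_smul, smul_smul]
    rw [show (1/σ^2) * (σ^2/(1-ρ^2)) * (1-ρ^2) = 1 by field_simp, one_smul]
  rw [hinv, Matrix.smul_mul, Matrix.trace_smul, smul_eq_mul]
  congr 1
  -- now: (ar1Prec n ρ * C).trace = ...
  set f : ℕ → ℝ := fun t => if h : t + 1 < n then
      C ⟨t, by omega⟩ ⟨t+1, h⟩ else 0 with hf
  have inner : ∀ i : Fin n, (∑ k, ar1Prec n ρ i k * C k i) =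
      (if (i:ℕ) = 0 ∨ (i:ℕ) + 1 = n then 1 else 1 + ρ^2) * C i i
      + (if 1 ≤ (i:ℕ) then -ρ * f ((i:ℕ) - 1) else 0)
      + (if (i:ℕ) + 1 < n then -ρ * f (i:ℕ) else 0) := by
    intro i
    simp only [ar1Prec, Matrix.of_apply]
    set d : ℝ := if (i:ℕ) = 0 ∨ (i:ℕ) + 1 = n then 1 else 1 + ρ^2 with hd
    simp only [ite_mul, zero_mul, add_mul]
    rw [Finset.sum_add_distrib, Finset.sum_add_distrib,
      sum_fin_eq (i:ℕ) (fun k => d * C k i),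
      sum_fin_eq' (i:ℕ) (fun k => -ρ * C k i),
      sum_fin_eq ((i:ℕ)+1) (fun k => -ρ * C k i),
      dif_pos i.isLt]
    simp only [Fin.eta]
    have e3 : (i:ℕ) + 1 < n → ∀ h2 : (i:ℕ) + 1 < n, f (i:ℕ) = C ⟨(i:ℕ)+1, h2⟩ i := by
      intro _ h2
      simp only [hf]
      rw [dif_pos h2]
      rw [hC.apply i ⟨(i:ℕ)+1, h2⟩]
    by_cases h1 : 1 ≤ (i:ℕ)
    · rw [dif_pos (⟨by omega, h1⟩ : (i:ℕ)-1 < n ∧ 1 ≤ (i:ℕ)), if_pos h1]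
      have e2 : f ((i:ℕ)-1) = C ⟨(i:ℕ)-1, by omega⟩ i := by
        have ht : (i:ℕ)-1+1 < n := by omega
        simp only [hf]
        rw [dif_pos ht]
        have hmk : (⟨(i:ℕ)-1+1, ht⟩ : Fin n) = i := Fin.ext (by simp only [Fin.val_mk]; omega)
        rw [hmk]
      rw [e2]
      by_cases h2 : (i:ℕ)+1 < n
      · rw [dif_pos h2, if_pos h2, e3 h2 h2]
      · rw [dif_neg h2, if_neg h2]
    · rw [dif_neg (fun hc => h1 hc.2), if_neg h1]
      by_cases h2 : (i:ℕ)+1 < n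
      · rw [dif_pos h2, if_pos h2, e3 h2 h2]
      · rw [dif_neg h2, if_neg h2]
  have hdiag : ∀ i : Fin n,
      (if (i:ℕ) = 0 ∨ (i:ℕ) + 1 = n then (1:ℝ) else 1 + ρ^2) * C i i =
      C i i + (if 1 ≤ (i:ℕ) ∧ (i:ℕ) + 1 < n then ρ^2 * C i i else 0) := by
    intro i
    have := i.isLt
    split_ifs with hb hint hint
    · omega
    · ring
    · ring
    · omega
  calc (ar1Prec n ρ * C).trace
      = ∑ i : Fin n, ∑ k, ar1Prec n ρ i k * C k i := by
        simp [Matrix.trace, Matrix.diag, Matrix.mul_apply]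
    _ = ∑ i : Fin n, ((C i i + (if 1 ≤ (i:ℕ) ∧ (i:ℕ) + 1 < n then ρ^2 * C i i else 0))
          + (if 1 ≤ (i:ℕ) then -ρ * f ((i:ℕ) - 1) else 0)
          + (if (i:ℕ) + 1 < n then -ρ * f (i:ℕ) else 0)) := by
        exact Finset.sum_congr rfl fun i _ => by rw [inner i, hdiag i]
    _ = (∑ i : Fin n, C i i) + (∑ i : Fin n, (if 1 ≤ (i:ℕ) ∧ (i:ℕ) + 1 < n then ρ^2 * C i i else 0))
          + (∑ t : Fin (n-1), -ρ * f t) + (∑ t : Fin (n-1), -ρ * f t) := by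
        rw [Finset.sum_add_distrib, Finset.sum_add_distrib, Finset.sum_add_distrib,
          sum_pred (fun t => -ρ * f t), sum_succ_lt (fun t => -ρ * f t)]
    _ = (∑ i : Fin n, C i i)
          + ρ^2 * (∑ i ∈ Finset.univ.filter (fun t : Fin n => 1 ≤ (t:ℕ) ∧ (t:ℕ) + 1 < n), C i i)
          - 2 * ρ * (∑ t : Fin (n-1), f t) := by
        rw [Finset.sum_filter, Finset.mul_sum, Finset.mul_sum]
        simp only [mul_ite, mul_zero]
        have hpull : ∑ t : Fin (n-1), -ρ * f t = -ρ * ∑ t : Fin (n-1), f t := by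
          rw [Finset.mul_sum]
        rw [hpull]
        have hpull2 : ∑ t : Fin (n-1), 2 * ρ * f t = 2 * ρ * ∑ t : Fin (n-1), f t := by
          rw [Finset.mul_sum]
        rw [hpull2]
        ring
    _ = _ := by
        congr 1
        congr 1
        exact Finset.sum_congr rfl fun t _ => by
          rw [hf]
          have ht : (t:ℕ) + 1 < n := by omega
          simp only [dif_pos ht]
end

section
/- Let n ≥ 2 be an integer. Let s₁, …, sₙ be real numbers, let S₁, …, Sₙ be nonnegative real numbers, and let S̃₁, …, S̃_{n−1} be real numbers. Define a = Σ_{t=1}^{n} (s_t² + S_t), b = Σ_{t=2}^{n−1} (s_t² + S_t), and c = Σ_{t=2}^{n} s_{t−1}·s_t + Σ_{t=1}^{n−1} S̃_t, and define the cubic polynomial p(ρ) = β₀ + β₁ρ + β₂ρ² + β₃ρ³ with β₀ = n·c, β₁ = −(a + n·b), β₂ = (2−n)·c, β₃ = (n−1)·b. Assume that a − 2cρ + bρ² > 0 for every ρ ∈ [−1, 1] (this is the condition that the updated innovation variance σ̂² is positive). Then p has exactly one root ρ in the open interval (−1, 1). -/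
open Finset

/-- The M-step cubic equation for the AR(1) parameter `ρ` in the FMOU EM
algorithm has exactly one root in `(-1, 1)`, provided the updated innovation
variance `σ̂²(ρ) = (a - 2cρ + bρ²)/n` is positive on `[-1, 1]`. -/
theorem em_cubic_unique_root (n : ℕ) (hn : 2 ≤ n)
    (s S Stld : ℕ → ℝ) (hS : ∀ t, 1 ≤ t → t ≤ n → 0 ≤ S t)
    (a b c : ℝ)
    (ha : a = ∑ t ∈ Finset.Icc 1 n, (s t ^ 2 + S t))
    (hb : b = ∑ t ∈ Finset.Icc 2 (n - 1), (s t ^ 2 + S t))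
    (hc : c = (∑ t ∈ Finset.Icc 2 n, s (t - 1) * s t) +
              ∑ t ∈ Finset.Icc 1 (n - 1), Stld t)
    (β₀ β₁ β₂ β₃ : ℝ)
    (hβ₀ : β₀ = (n : ℝ) * c)
    (hβ₁ : β₁ = -(a + (n : ℝ) * b))
    (hβ₂ : β₂ = ((2 : ℝ) - n) * c)
    (hβ₃ : β₃ = ((n : ℝ) - 1) * b)
    (hpos : ∀ ρ ∈ Set.Icc (-1 : ℝ) 1, 0 < a - 2 * c * ρ + b * ρ ^ 2) :
    ∃! ρ : ℝ, ρ ∈ Set.Ioo (-1 : ℝ) 1 ∧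
      β₀ + β₁ * ρ + β₂ * ρ ^ 2 + β₃ * ρ ^ 3 = 0 := by
  have hb0 : 0 ≤ b := by
    rw [hb]
    apply Finset.sum_nonneg
    intro t ht
    simp only [Finset.mem_Icc] at ht
    have h1 : 1 ≤ t := le_trans (by norm_num) ht.1
    have h2 : t ≤ n := le_trans ht.2 (Nat.sub_le n 1)
    have := hS t h1 h2
    positivity
  have hn2 : (2 : ℝ) ≤ (n : ℝ) := by exact_mod_cast hn
  have hβ₃0 : 0 ≤ β₃ := by rw [hβ₃]; nlinarith
  have hm1 : 0 < a + 2 * c + b := by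
    have := hpos (-1) (by constructor <;> norm_num)
    nlinarith
  have hp1 : 0 < a - 2 * c + b := by
    have := hpos 1 (by constructor <;> norm_num)
    nlinarith
  have hpm1 : β₀ + β₁ * (-1) + β₂ * (-1) ^ 2 + β₃ * (-1) ^ 3 = a + 2 * c + b := by
    rw [hβ₀, hβ₁, hβ₂, hβ₃]; ring
  have hpp1 : β₀ + β₁ * 1 + β₂ * 1 ^ 2 + β₃ * 1 ^ 3 = -(a - 2 * c + b) := by
    rw [hβ₀, hβ₁, hβ₂, hβ₃]; ring
  -- existence of a root by the intermediate value theorem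
  have hcont : ContinuousOn (fun ρ : ℝ => β₀ + β₁ * ρ + β₂ * ρ ^ 2 + β₃ * ρ ^ 3)
      (Set.Icc (-1) 1) := (by fun_prop : Continuous fun ρ : ℝ =>
        β₀ + β₁ * ρ + β₂ * ρ ^ 2 + β₃ * ρ ^ 3).continuousOn
  have himg := intermediate_value_Ioo' (by norm_num : (-1 : ℝ) ≤ 1) hcont
  have h0mem : (0 : ℝ) ∈ Set.Ioo (β₀ + β₁ * 1 + β₂ * 1 ^ 2 + β₃ * 1 ^ 3)
      (β₀ + β₁ * (-1) + β₂ * (-1) ^ 2 + β₃ * (-1) ^ 3) := by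
    rw [hpp1, hpm1]
    constructor <;> linarith
  obtain ⟨ρ, hρmem, hρ⟩ := himg h0mem
  have hρ' : β₀ + β₁ * ρ + β₂ * ρ ^ 2 + β₃ * ρ ^ 3 = 0 := hρ
  refine ⟨ρ, ⟨hρmem, hρ'⟩, ?_⟩
  rintro y ⟨hymem, hy⟩
  by_contra hne
  obtain ⟨hy1, hy2⟩ := hymem
  obtain ⟨hr1, hr2⟩ := hρmem
  -- factorization: the cubic equals (t - y)(t - ρ)(β₃ t + γ) with γ below
  set γ : ℝ := β₂ + β₃ * (y + ρ) with hγ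
  have key1 : β₀ + β₁ * (-1) + β₂ * (-1) ^ 2 + β₃ * (-1) ^ 3
      = (1 + y) * (1 + ρ) * (γ - β₃) := by
    have h : (y - ρ) * ((β₀ + β₁ * (-1) + β₂ * (-1) ^ 2 + β₃ * (-1) ^ 3)
        - (1 + y) * (1 + ρ) * (γ - β₃)) = 0 := by
      rw [hγ]
      linear_combination (-1 - ρ) * hy - (-1 - y) * hρ'
    rcases mul_eq_zero.mp h with h' | h'
    · exact absurd (sub_eq_zero.mp h') hne
    · exact sub_eq_zero.mp h'
  have key2 : β₀ + β₁ * 1 + β₂ * 1 ^ 2 + β₃ * 1 ^ 3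
      = (1 - y) * (1 - ρ) * (β₃ + γ) := by
    have h : (y - ρ) * ((β₀ + β₁ * 1 + β₂ * 1 ^ 2 + β₃ * 1 ^ 3)
        - (1 - y) * (1 - ρ) * (β₃ + γ)) = 0 := by
      rw [hγ]
      linear_combination (1 - ρ) * hy - (1 - y) * hρ'
    rcases mul_eq_zero.mp h with h' | h'
    · exact absurd (sub_eq_zero.mp h') hne
    · exact sub_eq_zero.mp h'
  have hq1 : 0 < (1 + y) * (1 + ρ) * (γ - β₃) := by
    rw [← key1, hpm1]; exact hm1
  have hq2 : (1 - y) * (1 - ρ) * (β₃ + γ) < 0 := by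
    rw [← key2, hpp1]; linarith
  have h1y : 0 < 1 + y := by linarith
  have h1r : 0 < 1 + ρ := by linarith
  have h2y : 0 < 1 - y := by linarith
  have h2r : 0 < 1 - ρ := by linarith
  have hA : 0 < γ - β₃ := by
    by_contra h
    push_neg at h
    nlinarith [mul_pos h1y h1r]
  have hB : β₃ + γ < 0 := by
    by_contra h
    push_neg at h
    nlinarith [mul_pos h2y h2r]
  linarith
end
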